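/- arXiv:1905.09122 — 3 statements merged into one kernel-verified Lean document; each statement's English description precedes it below -/
import Mathlib

section
/- For every probability density f on the unit sphere S², the matrix Q = ∫_{S²} (p⊗p − (1/3)I) f(p) dp is symmetric, traceless, and its smallest eigenvalue satisfies λ_min(Q) > −1/3; in particular Q ≥ −(1/3)I as quadratic forms. -/
open MeasureTheory Metric Matrix

noncomputable def sphereMeasure :
    Measure (sphere (0 : EuclideanSpace ℝ (Fin 3)) 1) :=
  (volume : Measure (EuclideanSpace ℝ (Fin 3))).toSphere

noncomputable def phiv (v : Fin 3 → ℝ) : EuclideanSpace ℝ (Fin 3) →ₗ[ℝ] ℝ :=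
  ∑ i, v i • (EuclideanSpace.projₗ i : EuclideanSpace ℝ (Fin 3) →ₗ[ℝ] ℝ)

lemma phiv_apply (v : Fin 3 → ℝ) (x : EuclideanSpace ℝ (Fin 3)) :
    phiv v x = ∑ i, v i * x i := by
  simp [phiv, LinearMap.sum_apply]

open scoped Pointwise in
lemma circle_null (v : Fin 3 → ℝ) (hv : v ≠ 0) :
    sphereMeasure {p : sphere (0 : EuclideanSpace ℝ (Fin 3)) 1 |
      ∑ i, v i * (p : EuclideanSpace ℝ (Fin 3)) i = 0} = 0 := by
  set s : Set (sphere (0 : EuclideanSpace ℝ (Fin 3)) 1) :=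
    {p | ∑ i, v i * (p : EuclideanSpace ℝ (Fin 3)) i = 0}
  have hcont : Continuous fun p : sphere (0 : EuclideanSpace ℝ (Fin 3)) 1 =>
      ∑ i, v i * (p : EuclideanSpace ℝ (Fin 3)) i := by
    refine continuous_finset_sum _ fun i _ => continuous_const.mul ?_
    exact ((EuclideanSpace.proj i).continuous.comp continuous_subtype_val)
  have hs : MeasurableSet s := hcont.measurable (measurableSet_singleton 0)
  rw [sphereMeasure, Measure.toSphere_apply' _ hs]
  have hsub : (Set.Ioo (0:ℝ) 1) • (Subtype.val '' s) ⊆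
      (LinearMap.ker (phiv v) : Set (EuclideanSpace ℝ (Fin 3))) := by
    rintro x ⟨r, hr, y, ⟨p, hp, rfl⟩, rfl⟩
    have hp' : ∑ i, v i * (p : EuclideanSpace ℝ (Fin 3)) i = 0 := hp
    simp only [SetLike.mem_coe, LinearMap.mem_ker, _root_.map_smul, smul_eq_mul]
    rw [phiv_apply, hp', mul_zero]
  have hker : LinearMap.ker (phiv v) ≠ ⊤ := by
    obtain ⟨i, hi⟩ := Function.ne_iff.1 hv
    intro h
    have : phiv v (EuclideanSpace.single i (v i)) = 0 := by
      rw [← LinearMap.mem_ker, h]; trivial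
    rw [phiv_apply] at this
    simp [EuclideanSpace.single_apply, Finset.sum_ite_eq'] at this
    exact hi (by simpa using this)
  have := Measure.addHaar_submodule (volume : Measure (EuclideanSpace ℝ (Fin 3)))
    (LinearMap.ker (phiv v)) hker
  rw [measure_mono_null hsub this]
  simp

lemma coord_meas (i : Fin 3) :
    Measurable fun p : sphere (0 : EuclideanSpace ℝ (Fin 3)) 1 =>
      (p : EuclideanSpace ℝ (Fin 3)) i :=
  ((EuclideanSpace.proj i).continuous.comp continuous_subtype_val).measurable

lemma coord_abs_le (p : sphere (0 : EuclideanSpace ℝ (Fin 3)) 1) (i : Fin 3) :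
    |(p : EuclideanSpace ℝ (Fin 3)) i| ≤ 1 := by
  have hnorm : ‖(p : EuclideanSpace ℝ (Fin 3))‖ = 1 :=
    mem_sphere_zero_iff_norm.1 p.2
  have h1 : |(p : EuclideanSpace ℝ (Fin 3)) i| ≤ ‖(p : EuclideanSpace ℝ (Fin 3))‖ := by
    rw [EuclideanSpace.norm_eq]
    have h0 : |(p : EuclideanSpace ℝ (Fin 3)) i| = Real.sqrt (‖(p : EuclideanSpace ℝ (Fin 3)) i‖^2) := by
      rw [Real.sqrt_sq_eq_abs, Real.norm_eq_abs, abs_abs]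
    rw [h0]
    refine Real.sqrt_le_sqrt ?_
    exact Finset.single_le_sum
      (f := fun j => ‖(p : EuclideanSpace ℝ (Fin 3)) j‖^2)
      (fun j _ => sq_nonneg _) (Finset.mem_univ i)
  linarith

lemma coord_sq_sum (p : sphere (0 : EuclideanSpace ℝ (Fin 3)) 1) :
    ∑ i, (p : EuclideanSpace ℝ (Fin 3)) i * (p : EuclideanSpace ℝ (Fin 3)) i = 1 := by
  have hnorm : ‖(p : EuclideanSpace ℝ (Fin 3))‖ = 1 :=
    mem_sphere_zero_iff_norm.1 p.2
  have := EuclideanSpace.norm_eq (𝕜 := ℝ) (p : EuclideanSpace ℝ (Fin 3))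
  rw [hnorm] at this
  have h2 : ∑ i, ‖(p : EuclideanSpace ℝ (Fin 3)) i‖^2 = 1 := by
    have := congrArg (·^2) this.symm
    simpa [Real.sq_sqrt (Finset.sum_nonneg fun i _ => sq_nonneg _)] using this
  calc ∑ i, (p : EuclideanSpace ℝ (Fin 3)) i * (p : EuclideanSpace ℝ (Fin 3)) i
      = ∑ i, ‖(p : EuclideanSpace ℝ (Fin 3)) i‖^2 := by
        refine Finset.sum_congr rfl fun i _ => ?_
        rw [Real.norm_eq_abs, sq_abs, sq]
    _ = 1 := h2

/-- For every probability density `f` on the unit sphere `S²`, the matrix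
`Q = ∫_{S²} (p ⊗ p − (1/3) I) f(p) dp` is symmetric, traceless, its smallest eigenvalue is
`> −1/3` (equivalently `v ⬝ Q v > −(1/3)|v|²` for all `v ≠ 0`), and in particular
`Q ≥ −(1/3) I` as quadratic forms. -/
theorem qTensor_symm_traceless_eigenvalue_bound
    (f : sphere (0 : EuclideanSpace ℝ (Fin 3)) 1 → ℝ)
    (hf_meas : Measurable f)
    (hf_nonneg : ∀ p, 0 ≤ f p)
    (hf_int : Integrable f sphereMeasure)
    (hf_prob : ∫ p, f p ∂sphereMeasure = 1)
    (Q : Matrix (Fin 3) (Fin 3) ℝ)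
    (hQ : ∀ i j, Q i j =
      ∫ p, ((p : EuclideanSpace ℝ (Fin 3)) i * (p : EuclideanSpace ℝ (Fin 3)) j
        - if i = j then (1 : ℝ) / 3 else 0) * f p ∂sphereMeasure) :
    Q.IsSymm ∧ Q.trace = 0 ∧
    (∀ v : Fin 3 → ℝ, v ≠ 0 → -(1 / 3) * (∑ i, v i ^ 2) < v ⬝ᵥ Q.mulVec v) ∧
    (∀ v : Fin 3 → ℝ, -(1 / 3) * (∑ i, v i ^ 2) ≤ v ⬝ᵥ Q.mulVec v) := by
  -- abbreviations
  set μ := sphereMeasure with hμ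
  -- integrability of coordinate products against f
  have hInt : ∀ i j : Fin 3, Integrable (fun p : sphere (0 : EuclideanSpace ℝ (Fin 3)) 1 =>
      (p : EuclideanSpace ℝ (Fin 3)) i * (p : EuclideanSpace ℝ (Fin 3)) j * f p) μ := by
    intro i j
    refine hf_int.mono ?_ (ae_of_all _ fun p => ?_)
    · exact (((coord_meas i).mul (coord_meas j)).mul hf_meas).aestronglyMeasurable
    · have h1 := coord_abs_le p i
      have h2 := coord_abs_le p j
      have hfn := hf_nonneg p
      rw [Real.norm_eq_abs, Real.norm_eq_abs, abs_mul, abs_mul, abs_of_nonneg hfn]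
      calc |(p : EuclideanSpace ℝ (Fin 3)) i| * |(p : EuclideanSpace ℝ (Fin 3)) j| * f p
          ≤ 1 * 1 * f p := by
            apply mul_le_mul_of_nonneg_right _ hfn
            exact mul_le_mul h1 h2 (abs_nonneg _) zero_le_one
        _ = f p := by ring
  set I : Fin 3 → Fin 3 → ℝ := fun i j => ∫ p, (p : EuclideanSpace ℝ (Fin 3)) i *
      (p : EuclideanSpace ℝ (Fin 3)) j * f p ∂μ with hI
  -- decomposition of Q
  have hQ' : ∀ i j, Q i j = I i j - (if i = j then (1:ℝ)/3 else 0) := by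
    intro i j
    rw [hQ i j]
    have : (fun p : sphere (0 : EuclideanSpace ℝ (Fin 3)) 1 =>
        ((p : EuclideanSpace ℝ (Fin 3)) i * (p : EuclideanSpace ℝ (Fin 3)) j
        - if i = j then (1:ℝ)/3 else 0) * f p)
        = fun p : sphere (0 : EuclideanSpace ℝ (Fin 3)) 1 =>
          (p : EuclideanSpace ℝ (Fin 3)) i * (p : EuclideanSpace ℝ (Fin 3)) j * f p
          - (if i = j then (1:ℝ)/3 else 0) * f p := by
      funext p; ring
    rw [this, integral_sub (hInt i j) (hf_int.const_mul _), integral_const_mul, hf_prob, mul_one]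
  -- integrability of (v·p)² f
  have hIntV : ∀ v : Fin 3 → ℝ, Integrable (fun p : sphere (0 : EuclideanSpace ℝ (Fin 3)) 1 =>
      (∑ i, v i * (p : EuclideanSpace ℝ (Fin 3)) i)^2 * f p) μ := by
    intro v
    refine (hf_int.const_mul ((∑ i, |v i|)^2)).mono ?_ (ae_of_all _ fun p => ?_)
    · refine (Measurable.pow_const ?_ 2).mul hf_meas |>.aestronglyMeasurable
      exact Finset.measurable_sum _ fun i _ => (measurable_const.mul (coord_meas i))
    · have hfn := hf_nonneg p
      rw [Real.norm_eq_abs, Real.norm_eq_abs, abs_mul, abs_mul, abs_of_nonneg hfn]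
      have hb : |∑ i, v i * (p : EuclideanSpace ℝ (Fin 3)) i| ≤ ∑ i, |v i| := by
        refine (Finset.abs_sum_le_sum_abs _ _).trans ?_
        refine Finset.sum_le_sum fun i _ => ?_
        rw [abs_mul]
        calc |v i| * |(p : EuclideanSpace ℝ (Fin 3)) i| ≤ |v i| * 1 :=
              mul_le_mul_of_nonneg_left (coord_abs_le p i) (abs_nonneg _)
          _ = |v i| := mul_one _
      have h2 : |(∑ i, v i * (p : EuclideanSpace ℝ (Fin 3)) i)^2| ≤ |(∑ i, |v i|)^2| := by
        rw [abs_pow, abs_pow]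
        exact pow_le_pow_left₀ (abs_nonneg _) (hb.trans (le_abs_self _)) 2
      exact mul_le_mul_of_nonneg_right h2 hfn
  -- expansion of the quadratic integral
  have hIexp : ∀ v : Fin 3 → ℝ,
      (∫ p, (∑ i, v i * (p : EuclideanSpace ℝ (Fin 3)) i)^2 * f p ∂μ)
        = ∑ i, ∑ j, v i * v j * I i j := by
    intro v
    have step1 : (fun p : sphere (0 : EuclideanSpace ℝ (Fin 3)) 1 =>
        (∑ i, v i * (p : EuclideanSpace ℝ (Fin 3)) i)^2 * f p)
        = fun p : sphere (0 : EuclideanSpace ℝ (Fin 3)) 1 =>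
          ∑ i, ∑ j, (v i * v j) * ((p : EuclideanSpace ℝ (Fin 3)) i *
            (p : EuclideanSpace ℝ (Fin 3)) j * f p) := by
      funext p
      rw [sq, Finset.sum_mul_sum, Finset.sum_mul]
      refine Finset.sum_congr rfl fun i _ => ?_
      rw [Finset.sum_mul]
      refine Finset.sum_congr rfl fun j _ => ?_
      ring
    rw [step1, integral_finset_sum _ fun i _ => ?_]
    · refine Finset.sum_congr rfl fun i _ => ?_
      rw [integral_finset_sum _ fun j _ => (hInt i j).const_mul _]
      exact Finset.sum_congr rfl fun j _ => integral_const_mul _ _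
    · exact integrable_finset_sum _ fun j _ => (hInt i j).const_mul _
  -- quadratic form identity
  have hquad : ∀ v : Fin 3 → ℝ, v ⬝ᵥ Q.mulVec v =
      (∫ p, (∑ i, v i * (p : EuclideanSpace ℝ (Fin 3)) i)^2 * f p ∂μ)
        - 1/3 * ∑ i, v i ^ 2 := by
    intro v
    rw [hIexp v]
    simp only [dotProduct, mulVec, hQ', sub_mul, mul_sub, Finset.mul_sum,
      Finset.sum_sub_distrib]
    congr 1
    · exact Finset.sum_congr rfl fun i _ => Finset.sum_congr rfl fun j _ => by ring
    · refine Finset.sum_congr rfl fun i _ => ?_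
      rw [Finset.sum_eq_single i]
      · simp; ring
      · intro j _ hji; simp [Ne.symm hji]
      · simp
  -- nonnegativity and positivity of the quadratic integral
  have hnn : ∀ v : Fin 3 → ℝ,
      0 ≤ ∫ p, (∑ i, v i * (p : EuclideanSpace ℝ (Fin 3)) i)^2 * f p ∂μ :=
    fun v => integral_nonneg fun p => mul_nonneg (sq_nonneg _) (hf_nonneg p)
  have hpos : ∀ v : Fin 3 → ℝ, v ≠ 0 →
      0 < ∫ p, (∑ i, v i * (p : EuclideanSpace ℝ (Fin 3)) i)^2 * f p ∂μ := by
    intro v hv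
    rcases (hnn v).lt_or_eq with h | h
    · exact h
    exfalso
    have hzero : (fun p : sphere (0 : EuclideanSpace ℝ (Fin 3)) 1 =>
        (∑ i, v i * (p : EuclideanSpace ℝ (Fin 3)) i)^2 * f p) =ᵐ[μ] 0 :=
      (integral_eq_zero_iff_of_nonneg
        (fun p => mul_nonneg (sq_nonneg _) (hf_nonneg p)) (hIntV v)).1 h.symm
    have hcirc : ∀ᵐ p ∂μ, p ∉ {p : sphere (0 : EuclideanSpace ℝ (Fin 3)) 1 |
        ∑ i, v i * (p : EuclideanSpace ℝ (Fin 3)) i = 0} :=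
      measure_eq_zero_iff_ae_notMem.1 (circle_null v hv)
    have hf0 : f =ᵐ[μ] 0 := by
      filter_upwards [hzero, hcirc] with p h1 h2
      have h3 : (∑ i, v i * (p : EuclideanSpace ℝ (Fin 3)) i) ≠ 0 := h2
      have h1' : (∑ i, v i * (p : EuclideanSpace ℝ (Fin 3)) i)^2 * f p = 0 := h1
      rcases mul_eq_zero.1 h1' with h4 | h4
      · exact absurd ((pow_eq_zero_iff two_ne_zero).1 h4) h3
      · simpa using h4
    rw [integral_congr_ae hf0] at hf_prob
    simp at hf_prob
  refine ⟨?_, ?_, ?_, ?_⟩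
  · -- symmetry
    have hsym : ∀ i j, Q j i = Q i j := by
      intro i j
      rw [hQ' j i, hQ' i j]
      congr 1
      · show (∫ p, (p : EuclideanSpace ℝ (Fin 3)) j * (p : EuclideanSpace ℝ (Fin 3)) i
            * f p ∂μ) = ∫ p, (p : EuclideanSpace ℝ (Fin 3)) i *
            (p : EuclideanSpace ℝ (Fin 3)) j * f p ∂μ
        exact integral_congr_ae (ae_of_all _ fun p => by ring)
      · simp [eq_comm]
    ext i j
    rw [Matrix.transpose_apply]
    exact hsym i j
  · -- trace
    have hsum : ∑ i, I i i = 1 := by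
      calc ∑ i, I i i
          = ∫ p, ∑ i, (p : EuclideanSpace ℝ (Fin 3)) i * (p : EuclideanSpace ℝ (Fin 3)) i
              * f p ∂μ := (integral_finset_sum _ fun i _ => hInt i i).symm
        _ = ∫ p, f p ∂μ := integral_congr_ae (ae_of_all _ fun p => by
              show ∑ i, (p : EuclideanSpace ℝ (Fin 3)) i * (p : EuclideanSpace ℝ (Fin 3)) i
                * f p = f p
              rw [← Finset.sum_mul, coord_sq_sum p, one_mul])
        _ = 1 := hf_prob
    simp only [Matrix.trace, Matrix.diag, hQ', Finset.sum_sub_distrib, hsum]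
    norm_num
  · intro v hv
    rw [hquad v]
    linarith [hpos v hv]
  · intro v
    rw [hquad v]
    linarith [hnn v]
end

section
/- A traceless symmetric 3×3 matrix Q has exactly two distinct eigenvalues if and only if Q = s(n⊗n − (1/3)I) for some real s ≠ 0 and some unit vector n ∈ S². -/
/-!
If exactly two eigenvalues occur among the three, one of them, `λ`, is simple, and the trace
condition forces the double one to be `-λ/2`. Comparing both sides on the orthonormal eigenbasis
gives `Q = -(λ/2) I + (3λ/2) u uᵀ` for the unit eigenvector `u` of `λ`. Conversely, if
`Q = s (n nᵀ - I/3)`, an eigenvector is either orthogonal to `n` (eigenvalue `-s/3`) or not, and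
then its eigenvalue is `2s/3`; since the trace vanishes, both values must occur.
-/

open Matrix

theorem Finset.card_image_eq_two_of_sum_eq_zero {ι K : Type*} [Fintype ι] [Nonempty ι]
    [Field K] [CharZero K] [DecidableEq K] {f : ι → K} {x y : K} (hsum : ∑ i, f i = 0)
    (hf : ∀ i, f i = x ∨ f i = y) (hx : x ≠ 0) (hy : y ≠ 0) : (univ.image f).card = 2 := by
  have himage : univ.image f ⊆ {x, y} := by simpa [subset_iff] using hf
  refine le_antisymm ((card_le_card himage).trans card_le_two) ?_
  by_contra! hlt
  obtain ⟨i₀⟩ := ‹Nonempty ι›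
  have hconst (i : ι) : f i = f i₀ :=
    card_le_one.1 (by omega) _ (mem_image_of_mem f (mem_univ i)) _
      (mem_image_of_mem f (mem_univ i₀))
  rw [sum_congr rfl fun i _ => hconst i, sum_const, nsmul_eq_mul, mul_eq_zero] at hsum
  rcases hsum with hcard | hzero
  · exact card_ne_zero.2 univ_nonempty (by exact_mod_cast hcard)
  · rcases hf i₀ with h | h
    exacts [hx (h ▸ hzero), hy (h ▸ hzero)]

theorem Fin.exists_forall_ne_eq_of_card_image_eq_two {α : Type*} [DecidableEq α]
    {f : Fin 3 → α} (h : (Finset.univ.image f).card = 2) :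
    ∃ k c, f k ≠ c ∧ ∀ j ≠ k, f j = c := by
  have himage : Finset.univ.image f = {f 0, f 1, f 2} := by
    ext; simp [Fin.exists_fin_succ, eq_comm]
  rw [himage] at h
  by_cases h01 : f 0 = f 1
  · refine ⟨2, f 0, fun h02 => ?_, fun j hj => ?_⟩
    · simp [← h01, ← h02] at h
    · fin_cases j <;> simp_all
  by_cases h02 : f 0 = f 2
  · refine ⟨1, f 0, Ne.symm h01, fun j hj => ?_⟩
    fin_cases j <;> simp_all
  by_cases h12 : f 1 = f 2
  · refine ⟨0, f 1, h01, fun j hj => ?_⟩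
    fin_cases j <;> simp_all
  rw [Finset.card_insert_of_notMem (by simp [h01, h02]), Finset.card_pair h12] at h
  cases h

namespace Matrix

theorem of_uniaxial_eq {n : Type*} [DecidableEq n] (s : ℝ) (v : n → ℝ) :
    (of fun i j => s * (v i * v j - if i = j then (1 : ℝ) / 3 else 0)) =
      (-s / 3) • 1 + s • vecMulVec v v := by
  ext i j
  by_cases hij : i = j
  · simp [hij, vecMulVec_apply]
    ring
  · simp [hij, vecMulVec_apply]

variable {n : Type*} [Fintype n]

theorem _root_.OrthonormalBasis.dotProduct_apply {ι : Type*} [Fintype ι] [DecidableEq ι]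
    (b : OrthonormalBasis ι ℝ (EuclideanSpace ℝ n)) (i j : ι) :
    ⇑(b i) ⬝ᵥ ⇑(b j) = if i = j then 1 else 0 := by
  rw [← orthonormal_iff_ite.mp b.orthonormal i j, EuclideanSpace.inner_eq_star_dotProduct,
    star_trivial, dotProduct_comm]

variable [DecidableEq n]

theorem eq_of_mulVec_orthonormalBasis_eq {𝕜 : Type*} [RCLike 𝕜]
    (b : OrthonormalBasis n 𝕜 (EuclideanSpace 𝕜 n)) {A B : Matrix n n 𝕜}
    (h : ∀ i, A *ᵥ b i = B *ᵥ b i) : A = B :=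
  toEuclideanLin.injective <| b.toBasis.ext fun i => by simp [toLpLin_apply, h]

theorem eq_or_eq_of_mulVec_eq_smul {K : Type*} [Field K] {a b μ : K} {w v : n → K}
    (hw : w ⬝ᵥ w = 1) (hv : v ≠ 0) (h : (a • 1 + b • vecMulVec w w) *ᵥ v = μ • v) :
    μ = a ∨ μ = a + b := by
  have hμ : (μ - a) • v = (b * (w ⬝ᵥ v)) • w := by
    rw [add_mulVec, smul_mulVec, smul_mulVec, one_mulVec, vecMulVec_mulVec,
      op_smul_eq_smul] at h
    rw [sub_smul, ← h, mul_smul, add_sub_cancel_left]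
  by_cases hwv : w ⬝ᵥ v = 0
  · left
    rw [hwv, mul_zero, zero_smul, smul_eq_zero] at hμ
    exact sub_eq_zero.1 (hμ.resolve_right hv)
  · right
    have hdot := congrArg (w ⬝ᵥ ·) hμ
    simp only [dotProduct_smul, hw, smul_eq_mul, mul_one] at hdot
    linear_combination mul_right_cancel₀ hwv hdot

theorem IsHermitian.eq_smul_one_add_smul_vecMulVec {A : Matrix n n ℝ} (hA : A.IsHermitian)
    {k : n} {c : ℝ} (h : ∀ j ≠ k, hA.eigenvalues j = c) :
    A = c • 1 + (hA.eigenvalues k - c) •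
      vecMulVec ⇑(hA.eigenvectorBasis k) ⇑(hA.eigenvectorBasis k) := by
  refine eq_of_mulVec_orthonormalBasis_eq hA.eigenvectorBasis fun m => ?_
  rw [mulVec_eigenvectorBasis, add_mulVec, smul_mulVec, smul_mulVec, one_mulVec,
    vecMulVec_mulVec, op_smul_eq_smul, hA.eigenvectorBasis.dotProduct_apply]
  by_cases hm : m = k
  · subst hm
    simp [← add_smul]
  · simp [h m hm, Ne.symm hm]

theorem IsHermitian.exists_uniaxial_of_card_image_eigenvalues_eq_two
    {A : Matrix (Fin 3) (Fin 3) ℝ} (hA : A.IsHermitian) (hsum : ∑ i, hA.eigenvalues i = 0)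
    (hcard : (Finset.univ.image hA.eigenvalues).card = 2) :
    ∃ s : ℝ, s ≠ 0 ∧ ∃ v : Fin 3 → ℝ, v ⬝ᵥ v = 1 ∧
      A = (-s / 3) • 1 + s • vecMulVec v v := by
  obtain ⟨k, c, hkc, hc⟩ := Fin.exists_forall_ne_eq_of_card_image_eq_two hcard
  have hk : hA.eigenvalues k = -2 * c := by
    rw [Fintype.sum_eq_add_sum_compl k,
      Finset.sum_congr rfl fun j hj => hc j (Finset.mem_compl.1 hj ∘ Finset.mem_singleton.2)]
      at hsum
    simp [Finset.card_compl] at hsum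
    linarith
  refine ⟨hA.eigenvalues k - c, sub_ne_zero.2 hkc, ⇑(hA.eigenvectorBasis k),
    by simpa using hA.eigenvectorBasis.dotProduct_apply k k, ?_⟩
  conv_lhs => rw [hA.eq_smul_one_add_smul_vecMulVec hc]
  rw [hk]
  congr 2
  ring

end Matrix

theorem uniaxial_iff_two_eigenvalues_general
    (Q : Matrix (Fin 3) (Fin 3) ℝ)
    (htr : Q.trace = 0)
    (hherm : Q.IsHermitian) :
    (Finset.univ.image hherm.eigenvalues).card = 2 ↔
      ∃ s : ℝ, s ≠ 0 ∧ ∃ n : Fin 3 → ℝ, (∑ i, n i ^ 2) = 1 ∧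
        Q = Matrix.of fun i j =>
          s * (n i * n j - if i = j then (1 : ℝ) / 3 else 0) := by
  have hsum : ∑ i, hherm.eigenvalues i = 0 := by
    simpa [hherm.trace_eq_sum_eigenvalues] using htr
  have hunit (v : Fin 3 → ℝ) : ∑ i, v i ^ 2 = 1 ↔ v ⬝ᵥ v = 1 := by simp [dotProduct, sq]
  simp only [hunit, of_uniaxial_eq]
  refine ⟨hherm.exists_uniaxial_of_card_image_eigenvalues_eq_two hsum, ?_⟩
  rintro ⟨s, hs, v, hv, hQ⟩
  refine Finset.card_image_eq_two_of_sum_eq_zero (x := -s / 3) (y := -s / 3 + s) hsum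
    (fun i => ?_) (div_ne_zero (neg_ne_zero.2 hs) three_ne_zero) (by contrapose! hs; linarith)
  exact eq_or_eq_of_mulVec_eq_smul hv
    ((WithLp.ofLp_eq_zero 2).ne.2 <| hherm.eigenvectorBasis.orthonormal.ne_zero i)
    (hQ ▸ hherm.mulVec_eigenvectorBasis i)

/-- A traceless symmetric `3×3` real matrix `Q` has exactly two distinct
eigenvalues if and only if `Q = s (n ⊗ n − (1/3) I)` for some real `s ≠ 0` and a unit vector
`n ∈ S²` (i.e. `Q` is uniaxial). -/
theorem uniaxial_iff_two_eigenvalues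
    (Q : Matrix (Fin 3) (Fin 3) ℝ)
    (hsymm : Q.IsSymm) (htr : Q.trace = 0)
    (hherm : Q.IsHermitian) :
    (Finset.univ.image hherm.eigenvalues).card = 2 ↔
      ∃ s : ℝ, s ≠ 0 ∧ ∃ n : Fin 3 → ℝ, (∑ i, n i ^ 2) = 1 ∧
        Q = Matrix.of fun i j =>
          s * (n i * n j - if i = j then (1 : ℝ) / 3 else 0) :=
  uniaxial_iff_two_eigenvalues_general Q htr hherm
end

section
/- Let T : Sym₀(3) → Sym₀(3) be a linear map that is frame indifferent, i.e. T(RAR^T) = R T(A) R^T for all rotations R ∈ SO(3) and all A ∈ Sym₀(3). Then T is a scalar multiple of the identity. -/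
/-!
The image `B = T diag(1, -1, 0)` is fixed by conjugation with the half turns `diag(1, -1, -1)` and
`diag(-1, 1, -1)`, which forces `B` to be diagonal, and it changes sign under the quarter turn about
the `z`-axis, which swaps the first two diagonal entries; hence `B = c • diag(1, -1, 0)`. Frame
indifference transports the eigenvalue `c` along the `SO(3)`-orbit of `diag(1, -1, 0)`, and this
orbit contains a basis of `Sym₀(3)`: the cyclic permutation of the axes gives `diag(0, 1, -1)`, and
the eighth turn about the `z`-axis gives the off-diagonal matrix `E₀₁ + E₁₀`, whose cyclic
permutations give the other two.
-/

open Matrix Real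

namespace Matrix

variable {n R : Type*} [Fintype n] [CommRing R]

theorem mul_mul_transpose_mul (M N A : Matrix n n R) :
    M * N * A * (M * N)ᵀ = M * (N * A * Nᵀ) * Mᵀ := by
  simp only [transpose_mul, Matrix.mul_assoc]

variable [DecidableEq n]

theorem diagonal_mem_specialOrthogonalGroup {d : n → R} (hd : ∀ i, d i * d i = 1)
    (hdet : ∏ i, d i = 1) : diagonal d ∈ specialOrthogonalGroup n R :=
  mem_specialOrthogonalGroup_iff.2 ⟨(mem_orthogonalGroup_iff _ _).2 (by
    simp only [diagonal_transpose, diagonal_mul_diagonal, hd, diagonal_one]),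
    by rw [det_diagonal, hdet]⟩

theorem diagonal_mul_diagonal_mul_transpose {d : n → R} (hd : ∀ i, d i * d i = 1) (e : n → R) :
    diagonal d * diagonal e * (diagonal d)ᵀ = diagonal e := by
  simp only [diagonal_transpose, diagonal_mul_diagonal, mul_right_comm _ (e _), hd, one_mul]

theorem diagonal_mul_mul_transpose_apply (d : n → R) (B : Matrix n n R) (i j : n) :
    (diagonal d * B * (diagonal d)ᵀ) i j = d i * d j * B i j := by
  rw [diagonal_transpose, mul_diagonal, diagonal_mul]
  ring

theorem apply_eq_zero_of_diagonal_conj_eq [NoZeroDivisors R] [CharZero R] {d : n → R}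
    {B : Matrix n n R} (hB : diagonal d * B * (diagonal d)ᵀ = B) {i j : n}
    (hij : d i * d j = -1) : B i j = 0 := by
  have h := congrFun (congrFun hB i) j
  rwa [diagonal_mul_mul_transpose_apply, hij, neg_one_mul, CharZero.neg_eq_self_iff] at h

end Matrix

theorem Module.End.conj_mem_eigenspace {n R : Type*} [Fintype n] [CommRing R]
    {T : Module.End R (Matrix n n R)} {A M : Matrix n n R} {c : R}
    (hM : T (M * A * Mᵀ) = M * T A * Mᵀ) (hA : A ∈ T.eigenspace c) :
    M * A * Mᵀ ∈ T.eigenspace c := by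
  rw [Module.End.mem_eigenspace_iff] at hA ⊢
  rw [hM, hA, mul_smul_comm, smul_mul_assoc]

namespace SO3

noncomputable def rotZ (θ : ℝ) : Matrix (Fin 3) (Fin 3) ℝ :=
  !![cos θ, -sin θ, 0; sin θ, cos θ, 0; 0, 0, 1]

def cycle : Matrix (Fin 3) (Fin 3) ℝ := !![0, 0, 1; 1, 0, 0; 0, 1, 0]

theorem rotZ_mem (θ : ℝ) : rotZ θ ∈ specialOrthogonalGroup (Fin 3) ℝ := by
  refine mem_specialOrthogonalGroup_iff.2 ⟨(mem_orthogonalGroup_iff _ _).2 ?_, ?_⟩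
  · ext i j
    fin_cases i <;> fin_cases j <;>
      simp [rotZ, Matrix.mul_apply, Fin.sum_univ_three, ← sq, mul_comm]
  · simp [rotZ, det_fin_three, ← sq]

theorem cycle_mem : cycle ∈ specialOrthogonalGroup (Fin 3) ℝ := by
  refine mem_specialOrthogonalGroup_iff.2 ⟨(mem_orthogonalGroup_iff _ _).2 ?_, ?_⟩
  · ext i j
    fin_cases i <;> fin_cases j <;> simp [cycle, Matrix.mul_apply, Fin.sum_univ_three]
  · simp [cycle, det_fin_three]

end SO3

namespace SymTraceless3

open SO3

def diag₀₁ : Matrix (Fin 3) (Fin 3) ℝ := diagonal ![1, -1, 0]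

def diag₁₂ : Matrix (Fin 3) (Fin 3) ℝ := diagonal ![0, 1, -1]

def offDiag₀₁ : Matrix (Fin 3) (Fin 3) ℝ := !![0, 1, 0; 1, 0, 0; 0, 0, 0]

def offDiag₀₂ : Matrix (Fin 3) (Fin 3) ℝ := !![0, 0, 1; 0, 0, 0; 1, 0, 0]

def offDiag₁₂ : Matrix (Fin 3) (Fin 3) ℝ := !![0, 0, 0; 0, 0, 1; 0, 1, 0]

theorem diag₀₁_isSymm : diag₀₁.IsSymm := isSymm_diagonal _

theorem trace_diag₀₁ : diag₀₁.trace = 0 := by simp [diag₀₁, Fin.sum_univ_three]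

theorem rotZ_conj_diag₀₁ (θ : ℝ) :
    rotZ θ * diag₀₁ * (rotZ θ)ᵀ = cos (2 * θ) • diag₀₁ + sin (2 * θ) • offDiag₀₁ := by
  ext i j
  fin_cases i <;> fin_cases j <;>
    simp [rotZ, diag₀₁, offDiag₀₁, Matrix.mul_apply, Fin.sum_univ_three, cos_two_mul',
      sin_two_mul, vecMul_diagonal] <;> ring

theorem rotZ_conj_diag₀₁_pi_div_two : rotZ (π / 2) * diag₀₁ * (rotZ (π / 2))ᵀ = -diag₀₁ := by
  rw [rotZ_conj_diag₀₁, mul_div_cancel₀ _ two_ne_zero, cos_pi, sin_pi, zero_smul, add_zero,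
    neg_one_smul]

theorem rotZ_conj_diag₀₁_pi_div_four : rotZ (π / 4) * diag₀₁ * (rotZ (π / 4))ᵀ = offDiag₀₁ := by
  rw [rotZ_conj_diag₀₁, show 2 * (π / 4) = π / 2 by ring, cos_pi_div_two, sin_pi_div_two,
    zero_smul, one_smul, zero_add]

theorem cycle_conj_diag₀₁ : cycle * diag₀₁ * cycleᵀ = diag₁₂ := by
  ext i j
  fin_cases i <;> fin_cases j <;>
    simp [cycle, diag₀₁, diag₁₂, Matrix.mul_apply, Fin.sum_univ_three, vecMul_diagonal]

theorem cycle_conj_offDiag₀₁ : cycle * offDiag₀₁ * cycleᵀ = offDiag₁₂ := by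
  ext i j
  fin_cases i <;> fin_cases j <;>
    simp [cycle, offDiag₀₁, offDiag₁₂, Matrix.mul_apply, Fin.sum_univ_three]

theorem cycle_conj_offDiag₁₂ : cycle * offDiag₁₂ * cycleᵀ = offDiag₀₂ := by
  ext i j
  fin_cases i <;> fin_cases j <;>
    simp [cycle, offDiag₀₂, offDiag₁₂, Matrix.mul_apply, Fin.sum_univ_three]

theorem eq_sum_of_isSymm_of_trace_eq_zero {A : Matrix (Fin 3) (Fin 3) ℝ} (hA : A.IsSymm)
    (htr : A.trace = 0) :
    A = A 0 0 • diag₀₁ - A 2 2 • diag₁₂ + A 0 1 • offDiag₀₁ + A 0 2 • offDiag₀₂ +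
      A 1 2 • offDiag₁₂ := by
  have h₁₁ : A 1 1 = -A 0 0 - A 2 2 := by linarith [trace_fin_three A]
  ext i j
  fin_cases i <;> fin_cases j <;>
    simp [diag₀₁, diag₁₂, offDiag₀₁, offDiag₀₂, offDiag₁₂, h₁₁, hA.apply 0 1, hA.apply 0 2,
      hA.apply 1 2]

theorem diag₀₁_mem_eigenspace {T : Module.End ℝ (Matrix (Fin 3) (Fin 3) ℝ)}
    (hT : ∀ R ∈ specialOrthogonalGroup (Fin 3) ℝ, T (R * diag₀₁ * Rᵀ) = R * T diag₀₁ * Rᵀ) :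
    diag₀₁ ∈ T.eigenspace (T diag₀₁ 0 0) := by
  rw [Module.End.mem_eigenspace_iff]
  generalize hB : T diag₀₁ = B at hT ⊢
  have fixed {d : Fin 3 → ℝ} (hd : ∀ i, d i * d i = 1) (hdet : ∏ i, d i = 1) :
      diagonal d * B * (diagonal d)ᵀ = B := by
    rw [← hT _ (diagonal_mem_specialOrthogonalGroup hd hdet), ← hB]
    exact congrArg T (diagonal_mul_diagonal_mul_transpose hd _)
  have hx := fixed (d := ![1, -1, -1]) (by simp [Fin.forall_fin_succ])
    (by simp [Fin.prod_univ_three])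
  have hy := fixed (d := ![-1, 1, -1]) (by simp [Fin.forall_fin_succ])
    (by simp [Fin.prod_univ_three])
  have off_diag : ∀ i j, i ≠ j → B i j = 0 := by
    intro i j hij
    by_cases hd : (![1, -1, -1] : Fin 3 → ℝ) i * ![1, -1, -1] j = -1
    · exact apply_eq_zero_of_diagonal_conj_eq hx hd
    · refine apply_eq_zero_of_diagonal_conj_eq hy ?_
      fin_cases i <;> fin_cases j <;> simp_all
  have hflip : rotZ (π / 2) * B * (rotZ (π / 2))ᵀ = -B := by
    rw [← hT _ (rotZ_mem _), rotZ_conj_diag₀₁_pi_div_two, map_neg, hB]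
  have h₁₁ : B 1 1 = -B 0 0 := by
    simpa [rotZ, Matrix.mul_apply, vecMul, dotProduct, Fin.sum_univ_three] using
      congrFun (congrFun hflip 0) 0
  have h₂₂ : B 2 2 = 0 := by
    simpa [rotZ, Matrix.mul_apply, vecMul, dotProduct, Fin.sum_univ_three,
      CharZero.eq_neg_self_iff] using congrFun (congrFun hflip 2) 2
  ext i j
  fin_cases i <;> fin_cases j <;> simp [diag₀₁, off_diag, h₁₁, h₂₂]

end SymTraceless3

open SO3 SymTraceless3 in
theorem frame_indifferent_linear_map_is_scalar_general
    (T : Matrix (Fin 3) (Fin 3) ℝ →ₗ[ℝ] Matrix (Fin 3) (Fin 3) ℝ)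
    (hframe : ∀ A : Matrix (Fin 3) (Fin 3) ℝ, A.IsSymm → A.trace = 0 →
      ∀ R ∈ Matrix.specialOrthogonalGroup (Fin 3) ℝ,
        T (R * A * Rᵀ) = R * T A * Rᵀ) :
    ∃ c : ℝ, ∀ A : Matrix (Fin 3) (Fin 3) ℝ, A.IsSymm → A.trace = 0 →
      T A = c • A := by
  have hT := hframe _ diag₀₁_isSymm trace_diag₀₁
  have hd₀₁ := diag₀₁_mem_eigenspace hT
  have orbit {R} (hR : R ∈ specialOrthogonalGroup (Fin 3) ℝ) :
      R * diag₀₁ * Rᵀ ∈ Module.End.eigenspace T (T diag₀₁ 0 0) :=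
    Module.End.conj_mem_eigenspace (hT R hR) hd₀₁
  have hd₁₂ := orbit cycle_mem
  have ho₀₁ := orbit (rotZ_mem (π / 4))
  have ho₁₂ := orbit (mul_mem cycle_mem (rotZ_mem (π / 4)))
  have ho₀₂ := orbit (mul_mem cycle_mem (mul_mem cycle_mem (rotZ_mem (π / 4))))
  rw [cycle_conj_diag₀₁] at hd₁₂
  rw [rotZ_conj_diag₀₁_pi_div_four] at ho₀₁
  rw [mul_mul_transpose_mul, rotZ_conj_diag₀₁_pi_div_four, cycle_conj_offDiag₀₁] at ho₁₂
  rw [mul_mul_transpose_mul, mul_mul_transpose_mul, rotZ_conj_diag₀₁_pi_div_four,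
    cycle_conj_offDiag₀₁, cycle_conj_offDiag₁₂] at ho₀₂
  refine ⟨T diag₀₁ 0 0, fun A hA htr => Module.End.mem_eigenspace_iff.1 ?_⟩
  rw [eq_sum_of_isSymm_of_trace_eq_zero hA htr]
  exact add_mem (add_mem (add_mem (sub_mem (Submodule.smul_mem _ _ hd₀₁)
    (Submodule.smul_mem _ _ hd₁₂)) (Submodule.smul_mem _ _ ho₀₁)) (Submodule.smul_mem _ _ ho₀₂))
    (Submodule.smul_mem _ _ ho₁₂)

/-- A linear map `T` on the space of symmetric traceless `3×3` matrices which
is frame indifferent (`T(R A Rᵀ) = R (T A) Rᵀ` for all `R ∈ SO(3)`) is a scalar multiple of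
the identity. -/
theorem frame_indifferent_linear_map_is_scalar
    (T : Matrix (Fin 3) (Fin 3) ℝ →ₗ[ℝ] Matrix (Fin 3) (Fin 3) ℝ)
    (hmaps : ∀ A : Matrix (Fin 3) (Fin 3) ℝ, A.IsSymm → A.trace = 0 →
      (T A).IsSymm ∧ (T A).trace = 0)
    (hframe : ∀ A : Matrix (Fin 3) (Fin 3) ℝ, A.IsSymm → A.trace = 0 →
      ∀ R ∈ Matrix.specialOrthogonalGroup (Fin 3) ℝ,
        T (R * A * Rᵀ) = R * T A * Rᵀ) :
    ∃ c : ℝ, ∀ A : Matrix (Fin 3) (Fin 3) ℝ, A.IsSymm → A.trace = 0 →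
      T A = c • A :=
  frame_indifferent_linear_map_is_scalar_general T hframe
end
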